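/- (Weighted uniqueness) Let w ∈ ℝⁿ with w_i ≥ 0 for all i, and let W = diag(w). Define the weighted operators D̃h = W·Dh and D̃v = W·Dv, with associated weighted gradient magnitude |D̃x|, normalized gradient D̃̂x, and set S̃₁ = {v ∈ ℝⁿ : |D̃v|_i = 0 for all i with |D̃x₁|_i = 0}. Let X = {x ∈ ℝⁿ : x_i ≥ 0 for all i}, λ > 0, and J_w(x) = (1/2)‖Kx − y‖₂² + λ Σ_{i=1}^n w_i |Dx|_i. Let x₁ ∈ X minimize J_w over X and assume: (i) there exists z ∈ ℝ^m with D̃hᵀ(D̃̂x₁)_{1..n} + D̃vᵀ(D̃̂x₁)_{n+1..2n} = Kᵀz; (ii) ker(K) ∩ S̃₁ = {0}. Then x₁ is the unique minimizer of J_w over X. -/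

import Mathlib

open Matrix Finset

/-- Gradient magnitude associated with a pair of matrices `(Ah, Av)`:
`sqrt((Ah x)_i² + (Av x)_i²)`. -/
noncomputable def gMag {n : ℕ} (Ah Av : Matrix (Fin n) (Fin n) ℝ)
    (x : Fin n → ℝ) (i : Fin n) : ℝ :=
  Real.sqrt ((Ah.mulVec x i) ^ 2 + (Av.mulVec x i) ^ 2)

/-- Horizontal component of the normalized gradient. -/
noncomputable def nGradH {n : ℕ} (Ah Av : Matrix (Fin n) (Fin n) ℝ)
    (x : Fin n → ℝ) (i : Fin n) : ℝ :=
  if gMag Ah Av x i = 0 then 1 / 2 else Ah.mulVec x i / gMag Ah Av x i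

/-- Vertical component of the normalized gradient. -/
noncomputable def nGradV {n : ℕ} (Ah Av : Matrix (Fin n) (Fin n) ℝ)
    (x : Fin n → ℝ) (i : Fin n) : ℝ :=
  if gMag Ah Av x i = 0 then 1 / 2 else Av.mulVec x i / gMag Ah Av x i

/-- `S₁` associated with the pair `(Ah, Av)` and the point `x₁`. -/
def S1 {n : ℕ} (Ah Av : Matrix (Fin n) (Fin n) ℝ) (x₁ : Fin n → ℝ) :
    Set (Fin n → ℝ) :=
  {v | ∀ i, gMag Ah Av x₁ i = 0 → gMag Ah Av v i = 0}

lemma cs2 (a₁ b₁ a₂ b₂ : ℝ) :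
    a₁ * a₂ + b₁ * b₂ ≤ Real.sqrt (a₁ ^ 2 + b₁ ^ 2) * Real.sqrt (a₂ ^ 2 + b₂ ^ 2) := by
  have h1 : (0:ℝ) ≤ a₁ ^ 2 + b₁ ^ 2 := by positivity
  have h2 : (0:ℝ) ≤ a₂ ^ 2 + b₂ ^ 2 := by positivity
  have hs1 := Real.sq_sqrt h1
  have hs2 := Real.sq_sqrt h2
  have hsq : (a₁ * a₂ + b₁ * b₂) ^ 2 ≤ (Real.sqrt (a₁ ^ 2 + b₁ ^ 2) * Real.sqrt (a₂ ^ 2 + b₂ ^ 2)) ^ 2 := by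
    rw [mul_pow, hs1, hs2]; nlinarith [sq_nonneg (a₁ * b₂ - a₂ * b₁)]
  calc a₁ * a₂ + b₁ * b₂ ≤ |a₁ * a₂ + b₁ * b₂| := le_abs_self _
    _ = Real.sqrt ((a₁ * a₂ + b₁ * b₂) ^ 2) := (Real.sqrt_sq_eq_abs _).symm
    _ ≤ Real.sqrt ((Real.sqrt (a₁ ^ 2 + b₁ ^ 2) * Real.sqrt (a₂ ^ 2 + b₂ ^ 2)) ^ 2) :=
        Real.sqrt_le_sqrt hsq
    _ = _ := Real.sqrt_sq (by positivity)

lemma tri2 (a₁ b₁ a₂ b₂ : ℝ) :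
    Real.sqrt (((a₁ + a₂) / 2) ^ 2 + ((b₁ + b₂) / 2) ^ 2) ≤
      (Real.sqrt (a₁ ^ 2 + b₁ ^ 2) + Real.sqrt (a₂ ^ 2 + b₂ ^ 2)) / 2 := by
  have hs1 := Real.sq_sqrt (show (0:ℝ) ≤ a₁ ^ 2 + b₁ ^ 2 by positivity)
  have hs2 := Real.sq_sqrt (show (0:ℝ) ≤ a₂ ^ 2 + b₂ ^ 2 by positivity)
  have hcs := cs2 a₁ b₁ a₂ b₂
  have h : ((a₁ + a₂) / 2) ^ 2 + ((b₁ + b₂) / 2) ^ 2 ≤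
      ((Real.sqrt (a₁ ^ 2 + b₁ ^ 2) + Real.sqrt (a₂ ^ 2 + b₂ ^ 2)) / 2) ^ 2 := by nlinarith
  calc Real.sqrt (((a₁ + a₂) / 2) ^ 2 + ((b₁ + b₂) / 2) ^ 2)
      ≤ Real.sqrt (((Real.sqrt (a₁ ^ 2 + b₁ ^ 2) + Real.sqrt (a₂ ^ 2 + b₂ ^ 2)) / 2) ^ 2) :=
        Real.sqrt_le_sqrt h
    _ = _ := Real.sqrt_sq (by positivity)

lemma gMag_zero {n : ℕ} {Ah Av : Matrix (Fin n) (Fin n) ℝ} {x : Fin n → ℝ} {i : Fin n} :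
    gMag Ah Av x i = 0 ↔ Ah.mulVec x i = 0 ∧ Av.mulVec x i = 0 := by
  unfold gMag
  rw [Real.sqrt_eq_zero (by positivity)]
  constructor
  · intro h
    have ha : Ah.mulVec x i ^ 2 = 0 := by
      nlinarith [sq_nonneg (Ah.mulVec x i), sq_nonneg (Av.mulVec x i)]
    have hb : Av.mulVec x i ^ 2 = 0 := by
      nlinarith [sq_nonneg (Ah.mulVec x i), sq_nonneg (Av.mulVec x i)]
    exact ⟨pow_eq_zero_iff two_ne_zero |>.mp ha, pow_eq_zero_iff two_ne_zero |>.mp hb⟩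
  · rintro ⟨h1, h2⟩; rw [h1, h2]; ring

/-- Weighted uniqueness: with weights `w ≥ 0`, weighted operators
`D̃h = diag(w)·Dh`, `D̃v = diag(w)·Dv`, if `x₁` minimizes
`J_w(x) = (1/2)‖Kx − y‖₂² + λ Σ wᵢ|Dx|ᵢ` over the nonnegative orthant `X`, `λ > 0`,
`D̃ᵀ(D̃̂x₁) = Kᵀz` for some `z`, and `ker(K) ∩ S̃₁ = {0}`, then `x₁` is the unique
minimizer of `J_w` over `X`. -/
theorem stmt7 (m n : ℕ) (K : Matrix (Fin m) (Fin n) ℝ) (y : Fin m → ℝ)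
    (Dh Dv : Matrix (Fin n) (Fin n) ℝ)
    (w : Fin n → ℝ) (hw : ∀ i, 0 ≤ w i)
    (lam : ℝ) (hlam : 0 < lam)
    (X : Set (Fin n → ℝ)) (hX : X = {x | ∀ i, 0 ≤ x i})
    (Dth Dtv : Matrix (Fin n) (Fin n) ℝ)
    (hDth : Dth = Matrix.diagonal w * Dh) (hDtv : Dtv = Matrix.diagonal w * Dv)
    (Jw : (Fin n → ℝ) → ℝ)
    (hJw : ∀ x, Jw x = (1 / 2) * ∑ i, (K.mulVec x i - y i) ^ 2
        + lam * ∑ i, w i * gMag Dh Dv x i)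
    (x₁ : Fin n → ℝ) (hx₁ : x₁ ∈ X) (hmin₁ : ∀ x ∈ X, Jw x₁ ≤ Jw x)
    (hz : ∃ z : Fin m → ℝ,
      Dthᵀ.mulVec (nGradH Dth Dtv x₁) + Dtvᵀ.mulVec (nGradV Dth Dtv x₁) = Kᵀ.mulVec z)
    (hker : ∀ v ∈ S1 Dth Dtv x₁, K.mulVec v = 0 → v = 0) :
    ∀ x₂ ∈ X, (∀ x ∈ X, Jw x₂ ≤ Jw x) → x₂ = x₁ := by
  intro x₂ hx₂ hmin₂
  obtain ⟨z, hz⟩ := hz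
  subst hX
  -- weighted operators act componentwise
  have hDthx : ∀ (x : Fin n → ℝ) i, Dth.mulVec x i = w i * Dh.mulVec x i := by
    intro x i; rw [hDth, ← Matrix.mulVec_mulVec, Matrix.mulVec_diagonal]
  have hDtvx : ∀ (x : Fin n → ℝ) i, Dtv.mulVec x i = w i * Dv.mulVec x i := by
    intro x i; rw [hDtv, ← Matrix.mulVec_mulVec, Matrix.mulVec_diagonal]
  have hwg : ∀ (x : Fin n → ℝ) i, w i * gMag Dh Dv x i = gMag Dth Dtv x i := by
    intro x i
    unfold gMag
    rw [hDthx, hDtvx, mul_pow, mul_pow, ← mul_add, Real.sqrt_mul (sq_nonneg _),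
      Real.sqrt_sq (hw i)]
  have hJ' : ∀ x, Jw x = (1 / 2) * ∑ i, (K.mulVec x i - y i) ^ 2
      + lam * ∑ i, gMag Dth Dtv x i := by
    intro x
    rw [hJw x]
    congr 1
    congr 1
    exact Finset.sum_congr rfl fun i _ => hwg x i
  -- midpoint
  set xm : Fin n → ℝ := fun i => (x₁ i + x₂ i) / 2 with hxm_def
  have hxm : xm ∈ {x : Fin n → ℝ | ∀ i, 0 ≤ x i} := by
    intro i
    have h1 := hx₁ i
    have h2 := hx₂ i
    simp only [hxm_def]
    positivity
  have hxm_smul : xm = (1/2 : ℝ) • (x₁ + x₂) := by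
    funext i; simp [hxm_def]; ring
  have hmV : ∀ (k : ℕ) (A : Matrix (Fin k) (Fin n) ℝ) (i : Fin k),
      A.mulVec xm i = (A.mulVec x₁ i + A.mulVec x₂ i) / 2 := by
    intro k A i
    rw [hxm_smul, Matrix.mulVec_smul, Matrix.mulVec_add]
    simp [Pi.smul_apply]
    ring
  -- equal minimal values
  have hJeq : Jw x₁ = Jw x₂ := le_antisymm (hmin₁ x₂ hx₂) (hmin₂ x₁ hx₁)
  -- quadratic part identity
  set Q : ℝ := ∑ i, (K.mulVec x₁ i - K.mulVec x₂ i) ^ 2 with hQ_def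
  have hFm : ∑ i, (K.mulVec xm i - y i) ^ 2
      = ∑ i, ((K.mulVec x₁ i - y i) ^ 2 / 2 + (K.mulVec x₂ i - y i) ^ 2 / 2
          - (K.mulVec x₁ i - K.mulVec x₂ i) ^ 2 / 4) := by
    refine Finset.sum_congr rfl fun i _ => ?_
    rw [hmV m K i]; ring
  have hGm : ∑ i, gMag Dth Dtv xm i
      ≤ (∑ i, gMag Dth Dtv x₁ i + ∑ i, gMag Dth Dtv x₂ i) / 2 := by
    calc ∑ i, gMag Dth Dtv xm i
        ≤ ∑ i, (gMag Dth Dtv x₁ i + gMag Dth Dtv x₂ i) / 2 := by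
          refine Finset.sum_le_sum fun i _ => ?_
          unfold gMag
          rw [hmV n Dth i, hmV n Dtv i]
          exact tri2 _ _ _ _
      _ = (∑ i, gMag Dth Dtv x₁ i + ∑ i, gMag Dth Dtv x₂ i) / 2 := by
          rw [← Finset.sum_div, Finset.sum_add_distrib]
  -- J(xm) lower bound forces Q = 0
  have hchain : Jw x₁ ≤ Jw x₁ - Q / 8 := by
    have h1 : Jw x₁ ≤ Jw xm := hmin₁ xm hxm
    have h2 : Jw xm ≤ (Jw x₁ + Jw x₂) / 2 - Q / 8 := by
      rw [hJ' xm, hJ' x₁, hJ' x₂, hFm]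
      rw [Finset.sum_sub_distrib, Finset.sum_add_distrib, ← Finset.sum_div, ← Finset.sum_div,
        ← Finset.sum_div, ← hQ_def]
      have := mul_le_mul_of_nonneg_left hGm (le_of_lt hlam)
      linarith
    linarith [hJeq]
  have hQ0 : Q = 0 := by
    have hQnonneg : 0 ≤ Q := Finset.sum_nonneg fun i _ => sq_nonneg _
    linarith
  have hKeq : K.mulVec x₁ = K.mulVec x₂ := by
    funext i
    have := (Finset.sum_eq_zero_iff_of_nonneg fun i _ => sq_nonneg
      ((K.mulVec x₁) i - (K.mulVec x₂) i)).mp hQ0 i (Finset.mem_univ i)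
    have h0 : (K.mulVec x₁) i - (K.mulVec x₂) i = 0 := pow_eq_zero_iff two_ne_zero |>.mp this
    linarith
  -- equal regularizer values
  have hGeq : ∑ i, gMag Dth Dtv x₁ i = ∑ i, gMag Dth Dtv x₂ i := by
    have h1 := hJ' x₁
    have h2 := hJ' x₂
    rw [hJeq, h2] at h1
    have hF : ∑ i, (K.mulVec x₂ i - y i) ^ 2 = ∑ i, (K.mulVec x₁ i - y i) ^ 2 := by
      refine Finset.sum_congr rfl fun i _ => ?_
      rw [congrFun hKeq i]
    rw [hF] at h1
    have hmul : lam * ∑ i, gMag Dth Dtv x₁ i = lam * ∑ i, gMag Dth Dtv x₂ i := by linarith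
    exact mul_left_cancel₀ hlam.ne' hmul
  -- certificate argument
  set v : Fin n → ℝ := x₂ - x₁ with hv_def
  have hKv : K.mulVec v = 0 := by
    rw [hv_def, Matrix.mulVec_sub, ← hKeq, sub_self]
  set pH : Fin n → ℝ := nGradH Dth Dtv x₁ with hpH_def
  set pV : Fin n → ℝ := nGradV Dth Dtv x₁ with hpV_def
  have hS : pH ⬝ᵥ (Dth *ᵥ v) + pV ⬝ᵥ (Dtv *ᵥ v) = 0 := by
    calc pH ⬝ᵥ (Dth *ᵥ v) + pV ⬝ᵥ (Dtv *ᵥ v)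
        = (pH ᵥ* Dth) ⬝ᵥ v + (pV ᵥ* Dtv) ⬝ᵥ v := by
          rw [Matrix.dotProduct_mulVec, Matrix.dotProduct_mulVec]
      _ = (Dthᵀ *ᵥ pH + Dtvᵀ *ᵥ pV) ⬝ᵥ v := by
          rw [add_dotProduct, Matrix.mulVec_transpose, Matrix.mulVec_transpose]
      _ = (Kᵀ *ᵥ z) ⬝ᵥ v := by rw [hz]
      _ = (z ᵥ* K) ⬝ᵥ v := by rw [Matrix.mulVec_transpose]
      _ = z ⬝ᵥ (K *ᵥ v) := (Matrix.dotProduct_mulVec z K v).symm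
      _ = 0 := by rw [hKv, dotProduct_zero]
  have hsum1 : ∑ i, (pH i * (Dth *ᵥ x₁) i + pV i * (Dtv *ᵥ x₁) i)
      = ∑ i, gMag Dth Dtv x₁ i := by
    refine Finset.sum_congr rfl fun i _ => ?_
    by_cases hg : gMag Dth Dtv x₁ i = 0
    · obtain ⟨ha, hb⟩ := gMag_zero.mp hg
      simp [hpH_def, hpV_def, nGradH, nGradV, ha, hb, hg]
    · have hgpos : 0 < gMag Dth Dtv x₁ i :=
        lt_of_le_of_ne (Real.sqrt_nonneg _) (Ne.symm hg)
      simp only [hpH_def, hpV_def, nGradH, nGradV, if_neg hg]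
      rw [div_mul_eq_mul_div, div_mul_eq_mul_div, ← add_div, div_eq_iff hg]
      have hsq : gMag Dth Dtv x₁ i ^ 2 = (Dth *ᵥ x₁) i ^ 2 + (Dtv *ᵥ x₁) i ^ 2 :=
        Real.sq_sqrt (by positivity)
      linarith [hsq]
  have hsum2 : ∑ i, (pH i * (Dth *ᵥ x₂) i + pV i * (Dtv *ᵥ x₂) i)
      = ∑ i, gMag Dth Dtv x₂ i := by
    have hexp : ∑ i, (pH i * (Dth *ᵥ x₂) i + pV i * (Dtv *ᵥ x₂) i)
        = ∑ i, (pH i * (Dth *ᵥ x₁) i + pV i * (Dtv *ᵥ x₁) i)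
          + (pH ⬝ᵥ (Dth *ᵥ v) + pV ⬝ᵥ (Dtv *ᵥ v)) := by
      simp only [dotProduct, hv_def, Matrix.mulVec_sub, Pi.sub_apply]
      rw [← Finset.sum_add_distrib, ← Finset.sum_add_distrib]
      refine Finset.sum_congr rfl fun i _ => ?_
      ring
    rw [hexp, hS, add_zero, hsum1, hGeq]
  have hle : ∀ i ∈ Finset.univ,
      pH i * (Dth *ᵥ x₂) i + pV i * (Dtv *ᵥ x₂) i ≤ gMag Dth Dtv x₂ i := by
    intro i _
    by_cases hg : gMag Dth Dtv x₁ i = 0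
    · simp only [hpH_def, hpV_def, nGradH, nGradV, if_pos hg]
      have hcs := cs2 (1/2) (1/2) ((Dth *ᵥ x₂) i) ((Dtv *ᵥ x₂) i)
      have h12 : Real.sqrt ((1/2:ℝ) ^ 2 + (1/2) ^ 2) ≤ 1 := by
        rw [show ((1/2:ℝ) ^ 2 + (1/2) ^ 2) = 1/2 by norm_num]
        calc Real.sqrt (1/2 : ℝ) ≤ Real.sqrt 1 := Real.sqrt_le_sqrt (by norm_num)
          _ = 1 := Real.sqrt_one
      have hnn := Real.sqrt_nonneg ((Dth *ᵥ x₂) i ^ 2 + (Dtv *ᵥ x₂) i ^ 2)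
      unfold gMag
      nlinarith [hcs, h12, hnn]
    · have hgpos : 0 < gMag Dth Dtv x₁ i :=
        lt_of_le_of_ne (Real.sqrt_nonneg _) (Ne.symm hg)
      simp only [hpH_def, hpV_def, nGradH, nGradV, if_neg hg]
      rw [div_mul_eq_mul_div, div_mul_eq_mul_div, ← add_div, div_le_iff₀ hgpos]
      have hcs := cs2 ((Dth *ᵥ x₁) i) ((Dtv *ᵥ x₁) i) ((Dth *ᵥ x₂) i) ((Dtv *ᵥ x₂) i)
      unfold gMag at *
      nlinarith [hcs]
  have heq := (Finset.sum_eq_sum_iff_of_le hle).mp hsum2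
  have hvS : v ∈ S1 Dth Dtv x₁ := by
    intro i hg
    have he := heq i (Finset.mem_univ i)
    simp only [hpH_def, hpV_def, nGradH, nGradV, if_pos hg] at he
    have hsq := Real.sq_sqrt
      (show (0:ℝ) ≤ (Dth *ᵥ x₂) i ^ 2 + (Dtv *ᵥ x₂) i ^ 2 by positivity)
    have hnn := Real.sqrt_nonneg ((Dth *ᵥ x₂) i ^ 2 + (Dtv *ᵥ x₂) i ^ 2)
    have h2 : gMag Dth Dtv x₂ i = 0 := by
      unfold gMag at he ⊢
      refine le_antisymm ?_ hnn
      nlinarith [he, hsq, hnn, sq_nonneg ((Dth *ᵥ x₂) i - (Dtv *ᵥ x₂) i)]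
    obtain ⟨ha₂, hb₂⟩ := gMag_zero.mp h2
    obtain ⟨ha₁, hb₁⟩ := gMag_zero.mp hg
    rw [gMag_zero]
    constructor <;> rw [hv_def, Matrix.mulVec_sub, Pi.sub_apply]
    · rw [ha₂, ha₁, sub_self]
    · rw [hb₂, hb₁, sub_self]
  have hv0 := hker v hvS hKv
  have : x₂ - x₁ = 0 := hv0
  exact sub_eq_zero.mp this
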